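/- The singular order of the vacuum polarization causal distribution is 2: for d̂(k) = (2π/3)(2m² + k²) sgn(k⁻) θ(k² − 4m²) √(1 − 4m²/k²), the limit lim_{α→0⁺} α² d̂(k/α) = (2π/3) k² θ(k²) sgn(k⁻) holds for all k with k² ≠ 0, and no power α^s with s < 2 gives a nonzero finite limit. -/

import Mathlib

/-!
For k² ≤ 0 the threshold θ(k²/α² − 4m²) kills d̂(k/α) for every α > 0. For k² > 0 it is
eventually 1, and then α² d̂(k/α) = (2π/3)(2m²α² + k²) sgn(k⁻) √(1 − 4m²α²/k²) is continuous
in α. If α^s d̂(k/α) had a limit for some s < 2, multiplying by α^(2−s) → 0 would force the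
α² limit (2π/3) k² θ(k²) sgn(k⁻) to vanish, i.e. k² ≤ 0, where the limit is 0.
-/

open Filter Topology Real

/-- The vacuum polarization causal distribution scalar
d̂(k) = (2π/3)(2m² + k²) sgn(k⁻) θ(k² − 4m²) √(1 − 4m²/k²), as a function of the
light-front square k² and of k⁻. -/
noncomputable def dHat (m k2 kminus : ℝ) : ℝ :=
  (2 * π / 3) * (2 * m ^ 2 + k2) * Real.sign kminus *
    (if 4 * m ^ 2 < k2 then 1 else 0) * Real.sqrt (1 - 4 * m ^ 2 / k2)

lemma dHat_eq_zero_of_le {m k2 : ℝ} (kminus : ℝ) (h : k2 ≤ 4 * m ^ 2) :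
    dHat m k2 kminus = 0 := by
  simp [dHat, not_lt.2 h]

lemma dHat_div_sq_eq_zero_of_nonpos (m : ℝ) {k2 : ℝ} (kminus : ℝ) (hk : k2 ≤ 0) (α : ℝ) :
    dHat m (k2 / α ^ 2) kminus = 0 :=
  dHat_eq_zero_of_le kminus <|
    (div_nonpos_of_nonpos_of_nonneg hk (sq_nonneg α)).trans (by positivity)

lemma sq_mul_dHat_div_sq {m k2 α : ℝ} (kminus : ℝ) (hα : α ≠ 0) (h : 4 * m ^ 2 * α ^ 2 < k2) :
    α ^ 2 * dHat m (k2 / α ^ 2) kminus =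
      (2 * π / 3) * (2 * m ^ 2 * α ^ 2 + k2) * Real.sign kminus *
        Real.sqrt (1 - 4 * m ^ 2 * α ^ 2 / k2) := by
  have hk : k2 ≠ 0 := (lt_of_le_of_lt (by positivity) h).ne'
  have hα2 : 0 < α ^ 2 := by positivity
  have hthr : 4 * m ^ 2 < k2 / α ^ 2 := by rwa [lt_div_iff₀ hα2]
  rw [dHat, if_pos hthr]
  field_simp

lemma tendsto_sq_mul_dHat_div_sq (m k2 kminus : ℝ) :
    Tendsto (fun α : ℝ => α ^ 2 * dHat m (k2 / α ^ 2) kminus) (𝓝[>] 0)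
      (𝓝 ((2 * π / 3) * k2 * (if 0 < k2 then 1 else 0) * Real.sign kminus)) := by
  rcases le_or_gt k2 0 with hk | hk
  · simp only [dHat_div_sq_eq_zero_of_nonpos m kminus hk, mul_zero, zero_mul, if_neg hk.not_gt]
    exact tendsto_const_nhds
  · have hthr : ∀ᶠ α in 𝓝[>] (0 : ℝ), α ≠ 0 ∧ 4 * m ^ 2 * α ^ 2 < k2 := by
      have hsmall : Tendsto (fun α : ℝ => 4 * m ^ 2 * α ^ 2) (𝓝 0) (𝓝 0) :=
        Continuous.tendsto' (by fun_prop) 0 0 (by simp)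
      filter_upwards [self_mem_nhdsWithin,
        nhdsWithin_le_nhds (hsmall.eventually (gt_mem_nhds hk))] with α hα hlt
      exact ⟨ne_of_gt hα, hlt⟩
    have hcont : Continuous (fun α : ℝ => (2 * π / 3) * (2 * m ^ 2 * α ^ 2 + k2) *
        Real.sign kminus * Real.sqrt (1 - 4 * m ^ 2 * α ^ 2 / k2)) := by
      fun_prop
    have hval : (2 * π / 3) * k2 * (if 0 < k2 then 1 else 0) * Real.sign kminus =
        (2 * π / 3) * (2 * m ^ 2 * 0 ^ 2 + k2) * Real.sign kminus *
          Real.sqrt (1 - 4 * m ^ 2 * 0 ^ 2 / k2) := by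
      simp [if_pos hk]
    rw [hval]
    refine ((hcont.tendsto 0).mono_left nhdsWithin_le_nhds).congr' ?_
    filter_upwards [hthr] with α hα
    exact (sq_mul_dHat_div_sq kminus hα.1 hα.2).symm

lemma tendsto_rpow_mul_zero_of_lt {f : ℝ → ℝ} {s t c : ℝ}
    (hf : Tendsto (fun α => α ^ s * f α) (𝓝[>] 0) (𝓝 c)) (hst : s < t) :
    Tendsto (fun α => α ^ t * f α) (𝓝[>] 0) (𝓝 0) := by
  have hts : 0 < t - s := sub_pos.2 hst
  have hpow : Tendsto (fun α : ℝ => α ^ (t - s)) (𝓝[>] 0) (𝓝 0) := by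
    simpa [zero_rpow hts.ne'] using
      (continuousAt_rpow_const 0 (t - s) (.inr hts.le)).tendsto.mono_left nhdsWithin_le_nhds
  refine (zero_mul c ▸ hpow.mul hf).congr' ?_
  filter_upwards [self_mem_nhdsWithin] with α (hα : 0 < α)
  rw [← mul_assoc, ← rpow_add hα, sub_add_cancel]

theorem stmt13_general (m k2 kminus : ℝ) (hkm : kminus ≠ 0) :
    Tendsto (fun α : ℝ => α ^ (2:ℝ) * dHat m (k2 / α ^ 2) kminus)
      (nhdsWithin 0 (Set.Ioi 0))
      (nhds ((2 * π / 3) * k2 * (if 0 < k2 then 1 else 0) * Real.sign kminus)) ∧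
    ∀ s : ℝ, s < 2 → ¬ ∃ c : ℝ, c ≠ 0 ∧
      Tendsto (fun α : ℝ => α ^ s * dHat m (k2 / α ^ 2) kminus)
        (nhdsWithin 0 (Set.Ioi 0)) (nhds c) := by
  have hlim : Tendsto (fun α : ℝ => α ^ (2:ℝ) * dHat m (k2 / α ^ 2) kminus) (𝓝[>] 0)
      (𝓝 ((2 * π / 3) * k2 * (if 0 < k2 then 1 else 0) * Real.sign kminus)) := by
    simpa only [rpow_two] using tendsto_sq_mul_dHat_div_sq m k2 kminus
  refine ⟨hlim, ?_⟩
  rintro s hs ⟨c, hc, hT⟩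
  have hzero := tendsto_nhds_unique (tendsto_rpow_mul_zero_of_lt hT hs) hlim
  have hk : k2 ≤ 0 := by
    by_contra! hk
    have hsign : Real.sign kminus ≠ 0 := mt Real.sign_eq_zero_iff.1 hkm
    rw [if_pos hk] at hzero
    exact mul_ne_zero (by positivity) hsign hzero.symm
  simp only [dHat_div_sq_eq_zero_of_nonpos m kminus hk, mul_zero] at hT
  exact hc (tendsto_nhds_unique hT tendsto_const_nhds)

/-- the singular order of the vacuum polarization is 2:
α² d̂(k/α) → (2π/3) k² θ(k²) sgn(k⁻) as α → 0⁺ (k² scaling as k²/α²), and no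
power α^s with s < 2 yields a nonzero finite limit. -/
theorem stmt13 (m k2 kminus : ℝ) (hm : 0 < m) (hk2 : k2 ≠ 0) (hkm : kminus ≠ 0) :
    Tendsto (fun α : ℝ => α ^ (2:ℝ) * dHat m (k2 / α ^ 2) kminus)
      (nhdsWithin 0 (Set.Ioi 0))
      (nhds ((2 * π / 3) * k2 * (if 0 < k2 then 1 else 0) * Real.sign kminus)) ∧
    ∀ s : ℝ, s < 2 → ¬ ∃ c : ℝ, c ≠ 0 ∧
      Tendsto (fun α : ℝ => α ^ s * dHat m (k2 / α ^ 2) kminus)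
        (nhdsWithin 0 (Set.Ioi 0)) (nhds c) :=
  stmt13_general m k2 kminus hkm
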